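/- (Remark: Frobenius-norm counterexample.) Let K be the 4×4 symmetric matrix with rows (1.0, 0.7, 0.9, 0.4), (0.7, 1.0, 0.6, 0.6), (0.9, 0.6, 1.0, 0.6), (0.4, 0.6, 0.6, 1.0). Then K is positive semidefinite. Let C be the 4×2 matrix consisting of the first two columns of K and let W be the leading 2×2 principal submatrix of K, so W = [[1, 0.7], [0.7, 1]]. Let G_nys = C M Cᵀ, where M = (1/3.4)·[[1,1],[1,1]] is the pseudo-inverse of the best rank-1 approximation of W, and let G_opt be any best rank-1 approximation of CW⁻¹Cᵀ in the Frobenius norm (a 4×4 matrix of rank ≤ 1 minimizing ‖CW⁻¹Cᵀ − G‖_F). Then ‖K − G_nys‖_F < ‖K − G_opt‖_F; that is, the standard Nyström rank-1 approximation is strictly better than the modified one in Frobenius norm for this matrix. -/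

import Mathlib

/-!
`C W⁻¹ Cᵀ` has rank two: writing `W⁻¹ = μ₁ w₁w₁ᵀ + μ₂ w₂w₂ᵀ` with `w₁, w₂` eigenvectors of
`W⁻¹CᵀC` gives `C W⁻¹ Cᵀ = μ₁ v₁v₁ᵀ + μ₂ v₂v₂ᵀ` with `vᵢ = C wᵢ` orthogonal, so its nonzero
eigenvalues are `λᵢ = μᵢ‖vᵢ‖² = (809 ± √305539)/510`. Expanding `‖C W⁻¹ Cᵀ - xyᵀ‖²` in the
coordinates of `x, y` along `v₁, v₂` shows that, as `λ₁ > λ₂`, the best rank-one approximation is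
unique (the equality case of Eckart–Young): `G_opt = μ₁ v₁v₁ᵀ`. The Nyström approximation is
`(5/17) ccᵀ` with `c = C(1, 1)`, and `‖K - α vvᵀ‖² = ‖K‖² - 2α vᵀKv + α²‖v‖⁴`, so the comparison
comes down to `0.8831… < 0.8852…` in `ℚ(√305539)`.
-/

open Matrix

/-- Frobenius norm of a real matrix: ‖A‖_F = sqrt(trace(Aᵀ A)). -/
noncomputable def frobNorm {α β : Type*} [Fintype α] [Fintype β] (A : Matrix α β ℝ) : ℝ :=
  Real.sqrt (Matrix.trace (Aᵀ * A))

/-- The 4×4 kernel matrix of the Frobenius-norm counterexample. -/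
def K10 : Matrix (Fin 4) (Fin 4) ℝ :=
  !![1, 0.7, 0.9, 0.4;
     0.7, 1, 0.6, 0.6;
     0.9, 0.6, 1, 0.6;
     0.4, 0.6, 0.6, 1]

/-- C consists of the first two columns of K. -/
def C10 : Matrix (Fin 4) (Fin 2) ℝ :=
  !![1, 0.7;
     0.7, 1;
     0.9, 0.6;
     0.4, 0.6]

/-- W is the leading 2×2 principal submatrix of K. -/
def W10 : Matrix (Fin 2) (Fin 2) ℝ := !![1, 0.7; 0.7, 1]

/-- M = (1/3.4)·[[1,1],[1,1]] is the pseudo-inverse of the best rank-1 approximation of W. -/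
noncomputable def M10 : Matrix (Fin 2) (Fin 2) ℝ := (3.4 : ℝ)⁻¹ • !![1, 1; 1, 1]

section Frobenius

variable {m n : Type*} [Fintype m] [Fintype n]

lemma dotProduct_self_nonneg (v : n → ℝ) : 0 ≤ v ⬝ᵥ v :=
  Finset.sum_nonneg fun i _ => mul_self_nonneg (v i)

lemma trace_transpose_mul_self (A : Matrix m n ℝ) : trace (Aᵀ * A) = ∑ i, ∑ j, A i j ^ 2 := by
  simp only [trace, diag, mul_apply, transpose_apply, sq]
  exact Finset.sum_comm

lemma frobNorm_nonneg (A : Matrix m n ℝ) : 0 ≤ frobNorm A := Real.sqrt_nonneg _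

lemma frobNorm_sq (A : Matrix m n ℝ) : frobNorm A ^ 2 = trace (Aᵀ * A) := by
  rw [frobNorm, Real.sq_sqrt (by rw [trace_transpose_mul_self]; positivity)]

lemma frobNorm_sub_sq (A B : Matrix m n ℝ) :
    frobNorm (A - B) ^ 2 = frobNorm A ^ 2 - 2 * trace (Aᵀ * B) + frobNorm B ^ 2 := by
  have hBA : trace (Bᵀ * A) = trace (Aᵀ * B) := by
    rw [← trace_transpose, transpose_mul, transpose_transpose]
  simp only [frobNorm_sq, transpose_sub, Matrix.sub_mul, Matrix.mul_sub, trace_sub, hBA]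
  ring

lemma trace_transpose_mul_vecMulVec (A : Matrix m n ℝ) (p : m → ℝ) (q : n → ℝ) :
    trace (Aᵀ * vecMulVec p q) = q ⬝ᵥ Aᵀ *ᵥ p := by
  rw [mul_vecMulVec, trace_vecMulVec, dotProduct_comm]

lemma trace_transpose_vecMulVec_mul_vecMulVec (p r : m → ℝ) (q s : n → ℝ) :
    trace ((vecMulVec p q)ᵀ * vecMulVec r s) = (p ⬝ᵥ r) * (q ⬝ᵥ s) := by
  rw [transpose_vecMulVec, vecMulVec_mul_vecMulVec, trace_vecMulVec, dotProduct_smul,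
    smul_eq_mul, mul_comm]

lemma frobNorm_smul_vecMulVec_self (c : ℝ) (v : n → ℝ) :
    frobNorm (c • vecMulVec v v) = |c| * (v ⬝ᵥ v) := by
  have hv := mul_nonneg (abs_nonneg c) (dotProduct_self_nonneg v)
  rw [← sq_eq_sq₀ (frobNorm_nonneg _) hv, frobNorm_sq, transpose_smul, transpose_vecMulVec,
    smul_mul, Matrix.mul_smul, trace_smul, trace_smul, vecMulVec_mul_vecMulVec, trace_vecMulVec,
    dotProduct_smul, smul_eq_mul, smul_eq_mul, smul_eq_mul, mul_pow, sq_abs]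
  ring

lemma frobNorm_sub_smul_vecMulVec_self_sq (K : Matrix n n ℝ) (hK : Kᵀ = K) (c : ℝ) (v : n → ℝ) :
    frobNorm (K - c • vecMulVec v v) ^ 2
      = frobNorm K ^ 2 - 2 * c * (v ⬝ᵥ K *ᵥ v) + (c * (v ⬝ᵥ v)) ^ 2 := by
  rw [frobNorm_sub_sq, frobNorm_smul_vecMulVec_self, Matrix.mul_smul, trace_smul,
    trace_transpose_mul_vecMulVec, hK, smul_eq_mul, mul_pow, sq_abs]
  ring

end Frobenius

lemma Matrix.exists_eq_vecMulVec_of_rank_le_one {m n K : Type*} [Fintype n] [DecidableEq n]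
    [Field K] {A : Matrix m n K} (hA : A.rank ≤ 1) : ∃ x y, A = vecMulVec x y := by
  obtain ⟨v, hv⟩ := finrank_le_one_iff.mp hA
  choose c hc using fun j => hv ⟨A.col j, mulVec_single_one A j ▸ LinearMap.mem_range_self _ _⟩
  refine ⟨v, c, Matrix.ext fun i j => ?_⟩
  have := congr_fun (congr_arg Subtype.val (hc j)) i
  simp only [SetLike.val_smul, Pi.smul_apply, smul_eq_mul, col_apply] at this
  rw [vecMulVec_apply, ← this, mul_comm]

lemma Matrix.mul_smul_vecMulVec_mul_transpose {m n R : Type*} [Fintype n] [CommSemiring R]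
    (C : Matrix m n R) (c : R) (w : n → R) :
    C * (c • vecMulVec w w) * Cᵀ = c • vecMulVec (C *ᵥ w) (C *ᵥ w) := by
  rw [Matrix.mul_smul, smul_mul, mul_vecMulVec, vecMulVec_mul, vecMul_transpose]

/- For orthonormal `u₁, u₂`, `cᵢ = uᵢ ⬝ᵥ x`, `dᵢ = uᵢ ⬝ᵥ y` and `P`, `Q` the squared norms of the
components of `x`, `y` orthogonal to `u₁, u₂`, the left side of `h` is
`‖l₁ u₁u₁ᵀ + l₂ u₂u₂ᵀ - xyᵀ‖²`. -/
lemma eq_of_rankOne_residual_le {l₁ l₂ c₁ c₂ d₁ d₂ P Q : ℝ} (hl₂ : 0 < l₂) (hl : l₂ < l₁)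
    (hP : 0 ≤ P) (hQ : 0 ≤ Q)
    (h : l₁ ^ 2 + l₂ ^ 2 - 2 * l₁ * (c₁ * d₁) - 2 * l₂ * (c₂ * d₂)
      + (c₁ ^ 2 + c₂ ^ 2 + P) * (d₁ ^ 2 + d₂ ^ 2 + Q) ≤ l₂ ^ 2) :
    c₁ * d₁ = l₁ ∧ c₂ = 0 ∧ d₂ = 0 ∧ P = 0 ∧ Q = 0 := by
  set s := c₁ * d₁
  set t := c₂ * d₂
  have hst : |s| * |t| = |c₁ * d₂| * |c₂ * d₁| := by
    simp only [s, t, ← abs_mul]; ring_nf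
  have hsplit : l₁ ^ 2 + l₂ ^ 2 - 2 * l₁ * s - 2 * l₂ * t
      + (c₁ ^ 2 + c₂ ^ 2 + P) * (d₁ ^ 2 + d₂ ^ 2 + Q) - l₂ ^ 2
      = (l₁ - |s| - |t|) ^ 2 + 2 * (l₁ - l₂) * |t| + 2 * l₁ * (|s| - s) + 2 * l₂ * (|t| - t)
        + (|c₁ * d₂| - |c₂ * d₁|) ^ 2
        + (P * (d₁ ^ 2 + d₂ ^ 2) + Q * (c₁ ^ 2 + c₂ ^ 2) + P * Q) := by
    linear_combination -sq_abs s - sq_abs t - sq_abs (c₁ * d₂) - sq_abs (c₂ * d₁) - 2 * hst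
  have hT₁ := sq_nonneg (l₁ - |s| - |t|)
  have hT₂ : 0 ≤ (l₁ - l₂) * |t| := mul_nonneg (by linarith) (abs_nonneg t)
  have hT₃ : 0 ≤ l₁ * (|s| - s) := mul_nonneg (by linarith) (by linarith [le_abs_self s])
  have hT₄ : 0 ≤ l₂ * (|t| - t) := mul_nonneg hl₂.le (by linarith [le_abs_self t])
  have hT₅ := sq_nonneg (|c₁ * d₂| - |c₂ * d₁|)
  have hPd : 0 ≤ P * (d₁ ^ 2 + d₂ ^ 2) := by positivity
  have hQc : 0 ≤ Q * (c₁ ^ 2 + c₂ ^ 2) := by positivity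
  have hPQ : 0 ≤ P * Q := by positivity
  have ht : |t| = 0 := by
    have : (l₁ - l₂) * |t| = 0 := by linarith
    exact (mul_eq_zero.mp this).resolve_left (by linarith)
  have hs : |s| = s := by
    have : l₁ * (|s| - s) = 0 := by linarith
    linarith [(mul_eq_zero.mp this).resolve_left (by linarith)]
  have hsl : s = l₁ := by
    have : (l₁ - |s| - |t|) ^ 2 = 0 := by linarith
    linarith [pow_eq_zero_iff two_ne_zero |>.mp this]
  have hc₁ : c₁ ≠ 0 := by rintro rfl; simp [s] at hsl; linarith
  have hd₁ : d₁ ≠ 0 := by rintro rfl; simp [s] at hsl; linarith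
  have hcross : |c₁ * d₂| = |c₂ * d₁| := by
    have : (|c₁ * d₂| - |c₂ * d₁|) ^ 2 = 0 := by linarith
    linarith [pow_eq_zero_iff two_ne_zero |>.mp this]
  have hc₂d₂ : c₂ = 0 ∧ d₂ = 0 := by
    rcases mul_eq_zero.mp (abs_eq_zero.mp ht) with h₀ | h₀ <;> simp_all [abs_mul]
  have hP₀ : P * (d₁ ^ 2 + d₂ ^ 2) = 0 := by linarith
  have hQ₀ : Q * (c₁ ^ 2 + c₂ ^ 2) = 0 := by linarith
  refine ⟨hsl, hc₂d₂.1, hc₂d₂.2, ?_, ?_⟩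
  · exact (mul_eq_zero.mp hP₀).resolve_right (by positivity)
  · exact (mul_eq_zero.mp hQ₀).resolve_right (by positivity)

section Orthonormal

variable {n : Type*} [Fintype n] {u₁ u₂ : n → ℝ}

lemma dotProduct_self_sub_orthogonalProjection (hu₁ : u₁ ⬝ᵥ u₁ = 1) (hu₂ : u₂ ⬝ᵥ u₂ = 1)
    (hu : u₁ ⬝ᵥ u₂ = 0) (x : n → ℝ) :
    (x - (u₁ ⬝ᵥ x) • u₁ - (u₂ ⬝ᵥ x) • u₂) ⬝ᵥ (x - (u₁ ⬝ᵥ x) • u₁ - (u₂ ⬝ᵥ x) • u₂)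
      = x ⬝ᵥ x - (u₁ ⬝ᵥ x) ^ 2 - (u₂ ⬝ᵥ x) ^ 2 := by
  simp only [sub_dotProduct, dotProduct_sub, smul_dotProduct, dotProduct_smul, smul_eq_mul,
    dotProduct_comm x u₁, dotProduct_comm x u₂, dotProduct_comm u₂ u₁, hu₁, hu₂, hu]
  ring

lemma frobNorm_rankTwo_sub_vecMulVec_sq (hu₁ : u₁ ⬝ᵥ u₁ = 1) (hu₂ : u₂ ⬝ᵥ u₂ = 1)
    (hu : u₁ ⬝ᵥ u₂ = 0) (l₁ l₂ : ℝ) (x y : n → ℝ) :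
    frobNorm (l₁ • vecMulVec u₁ u₁ + l₂ • vecMulVec u₂ u₂ - vecMulVec x y) ^ 2
      = l₁ ^ 2 + l₂ ^ 2 - 2 * l₁ * ((u₁ ⬝ᵥ x) * (u₁ ⬝ᵥ y)) - 2 * l₂ * ((u₂ ⬝ᵥ x) * (u₂ ⬝ᵥ y))
        + (x ⬝ᵥ x) * (y ⬝ᵥ y) := by
  simp only [frobNorm_sq, transpose_sub, transpose_add, transpose_smul, Matrix.sub_mul,
    Matrix.mul_sub, Matrix.add_mul, Matrix.mul_add, smul_mul, Matrix.mul_smul, trace_sub,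
    trace_add, trace_smul, trace_transpose_vecMulVec_mul_vecMulVec, smul_eq_mul,
    dotProduct_comm x u₁, dotProduct_comm y u₁, dotProduct_comm x u₂, dotProduct_comm y u₂,
    dotProduct_comm u₂ u₁, hu₁, hu₂, hu]
  ring

theorem vecMulVec_eq_of_frobNorm_rankTwo_sub_le (hu₁ : u₁ ⬝ᵥ u₁ = 1) (hu₂ : u₂ ⬝ᵥ u₂ = 1)
    (hu : u₁ ⬝ᵥ u₂ = 0) {l₁ l₂ : ℝ} (hl₂ : 0 < l₂) (hl : l₂ < l₁) {x y : n → ℝ}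
    (h : frobNorm (l₁ • vecMulVec u₁ u₁ + l₂ • vecMulVec u₂ u₂ - vecMulVec x y) ≤ l₂) :
    vecMulVec x y = l₁ • vecMulVec u₁ u₁ := by
  set px := x - (u₁ ⬝ᵥ x) • u₁ - (u₂ ⬝ᵥ x) • u₂
  set py := y - (u₁ ⬝ᵥ y) • u₁ - (u₂ ⬝ᵥ y) • u₂
  have hx : x ⬝ᵥ x = (u₁ ⬝ᵥ x) ^ 2 + (u₂ ⬝ᵥ x) ^ 2 + px ⬝ᵥ px := by
    rw [dotProduct_self_sub_orthogonalProjection hu₁ hu₂ hu]; ring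
  have hy : y ⬝ᵥ y = (u₁ ⬝ᵥ y) ^ 2 + (u₂ ⬝ᵥ y) ^ 2 + py ⬝ᵥ py := by
    rw [dotProduct_self_sub_orthogonalProjection hu₁ hu₂ hu]; ring
  have hsq := pow_le_pow_left₀ (frobNorm_nonneg _) h 2
  rw [frobNorm_rankTwo_sub_vecMulVec_sq hu₁ hu₂ hu, hx, hy] at hsq
  obtain ⟨hcd, hc₂, hd₂, hpx, hpy⟩ := eq_of_rankOne_residual_le hl₂ hl
    (dotProduct_self_nonneg px) (dotProduct_self_nonneg py) hsq
  have hx₁ : x = (u₁ ⬝ᵥ x) • u₁ := by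
    simpa only [px, hc₂, zero_smul, sub_zero, sub_eq_zero] using dotProduct_self_eq_zero.mp hpx
  have hy₁ : y = (u₁ ⬝ᵥ y) • u₁ := by
    simpa only [py, hd₂, zero_smul, sub_zero, sub_eq_zero] using dotProduct_self_eq_zero.mp hpy
  rw [hx₁, hy₁, smul_vecMulVec, vecMulVec_smul, smul_smul, hcd]

end Orthonormal

section Orthogonal

variable {n : Type*} [Fintype n]

lemma dotProduct_self_normalize {v : n → ℝ} (hv : 0 < v ⬝ᵥ v) :
    ((√(v ⬝ᵥ v))⁻¹ • v) ⬝ᵥ ((√(v ⬝ᵥ v))⁻¹ • v) = 1 := by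
  rw [smul_dotProduct, dotProduct_smul, smul_eq_mul, smul_eq_mul, ← mul_assoc, ← mul_inv,
    Real.mul_self_sqrt hv.le, inv_mul_cancel₀ hv.ne']

lemma smul_vecMulVec_normalize (v : n → ℝ) (hv : 0 < v ⬝ᵥ v) :
    (v ⬝ᵥ v) • vecMulVec ((√(v ⬝ᵥ v))⁻¹ • v) ((√(v ⬝ᵥ v))⁻¹ • v) = vecMulVec v v := by
  rw [smul_vecMulVec, vecMulVec_smul, smul_smul, smul_smul, mul_assoc, ← mul_inv,
    Real.mul_self_sqrt hv.le, mul_inv_cancel₀ hv.ne', one_smul]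

lemma pos_dotProduct_self_of_mul_pos {c : ℝ} {v : n → ℝ} (h : 0 < c * (v ⬝ᵥ v)) :
    0 < v ⬝ᵥ v :=
  (dotProduct_self_nonneg v).lt_of_ne fun h₀ => by simp [← h₀] at h

theorem vecMulVec_eq_of_frobNorm_sub_le {v₁ v₂ x y : n → ℝ} {m₁ m₂ : ℝ} (hv : v₁ ⬝ᵥ v₂ = 0)
    (h₂ : 0 < m₂ * (v₂ ⬝ᵥ v₂)) (h₁₂ : m₂ * (v₂ ⬝ᵥ v₂) < m₁ * (v₁ ⬝ᵥ v₁))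
    (h : frobNorm (m₁ • vecMulVec v₁ v₁ + m₂ • vecMulVec v₂ v₂ - vecMulVec x y)
      ≤ frobNorm (m₁ • vecMulVec v₁ v₁ + m₂ • vecMulVec v₂ v₂ - m₁ • vecMulVec v₁ v₁)) :
    vecMulVec x y = m₁ • vecMulVec v₁ v₁ := by
  have hv₂ := pos_dotProduct_self_of_mul_pos h₂
  have hv₁ := pos_dotProduct_self_of_mul_pos (h₂.trans h₁₂)
  have hnormalize (m : ℝ) {v : n → ℝ} (hv : 0 < v ⬝ᵥ v) : m • vecMulVec v v
      = (m * (v ⬝ᵥ v)) • vecMulVec ((√(v ⬝ᵥ v))⁻¹ • v) ((√(v ⬝ᵥ v))⁻¹ • v) := by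
    rw [mul_smul, smul_vecMulVec_normalize v hv]
  rw [add_sub_cancel_left, frobNorm_smul_vecMulVec_self,
    abs_of_pos (pos_of_mul_pos_left h₂ hv₂.le)] at h
  rw [hnormalize m₁ hv₁, hnormalize m₂ hv₂] at h
  rw [hnormalize m₁ hv₁]
  refine vecMulVec_eq_of_frobNorm_rankTwo_sub_le (dotProduct_self_normalize hv₁)
    (dotProduct_self_normalize hv₂) ?_ h₂ h₁₂ h
  rw [smul_dotProduct, dotProduct_smul, hv, smul_zero, smul_zero]

end Orthogonal

namespace NystromCounterexample

noncomputable def r : ℝ := √305539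

lemma r_sq : r ^ 2 = 305539 := Real.sq_sqrt (by norm_num)

lemma r_cube : r ^ 3 = 305539 * r := by rw [pow_succ, r_sq]

lemma r_pos : 0 < r := Real.sqrt_pos.mpr (by norm_num)

lemma r_lt : r < 553 := by nlinarith [r_sq, r_pos]

-- `wᵢ` is an eigenvector of `W⁻¹CᵀC` for the eigenvalue `(809 ± r)/510`, and `μᵢ` is that
-- eigenvalue divided by `‖C wᵢ‖²`.
noncomputable def w₁ : Fin 2 → ℝ := ![633, -125 + r]
noncomputable def w₂ : Fin 2 → ℝ := ![633, -125 - r]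
noncomputable def μ₁ : ℝ := 50 / 20435139 - 15905 / 6243731934921 * r
noncomputable def μ₂ : ℝ := 50 / 20435139 + 15905 / 6243731934921 * r
noncomputable def v₁ : Fin 4 → ℝ := C10 *ᵥ w₁
noncomputable def v₂ : Fin 4 → ℝ := C10 *ᵥ w₂
def c : Fin 4 → ℝ := C10 *ᵥ ![1, 1]

lemma W10_inv : W10⁻¹ = μ₁ • vecMulVec w₁ w₁ + μ₂ • vecMulVec w₂ w₂ := by
  refine inv_eq_right_inv (Matrix.ext fun i j => ?_)
  fin_cases i <;> fin_cases j <;>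
    simp [W10, w₁, w₂, μ₁, μ₂, mul_apply, Fin.sum_univ_two] <;>
    norm_num <;> linarith [r_sq, r_cube]

lemma C10_mul_W10_inv_mul_transpose :
    C10 * W10⁻¹ * C10ᵀ = μ₁ • vecMulVec v₁ v₁ + μ₂ • vecMulVec v₂ v₂ := by
  rw [W10_inv, Matrix.mul_add, Matrix.add_mul, mul_smul_vecMulVec_mul_transpose,
    mul_smul_vecMulVec_mul_transpose, v₁, v₂]

lemma C10_mul_M10_mul_transpose : C10 * M10 * C10ᵀ = (5 / 17 : ℝ) • vecMulVec c c := by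
  have hM : M10 = (5 / 17 : ℝ) • vecMulVec ![1, 1] ![1, 1] := by
    ext i j; fin_cases i <;> fin_cases j <;> norm_num [M10, vecMulVec_apply]
  rw [hM, mul_smul_vecMulVec_mul_transpose, c]

lemma v₁_dotProduct_v₂ : v₁ ⬝ᵥ v₂ = 0 := by
  simp [v₁, v₂, w₁, w₂, C10, dotProduct, mulVec, Fin.sum_univ_four, Fin.sum_univ_two]
  norm_num
  linarith [r_sq]

lemma μ₁_mul_dotProduct_self : μ₁ * (v₁ ⬝ᵥ v₁) = (809 + r) / 510 := by
  simp [v₁, w₁, μ₁, C10, dotProduct, mulVec, Fin.sum_univ_four, Fin.sum_univ_two]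
  norm_num
  linarith [r_sq, r_cube]

lemma μ₂_mul_dotProduct_self : μ₂ * (v₂ ⬝ᵥ v₂) = (809 - r) / 510 := by
  simp [v₂, w₂, μ₂, C10, dotProduct, mulVec, Fin.sum_univ_four, Fin.sum_univ_two]
  norm_num
  linarith [r_sq, r_cube]

lemma eigenvalue₂_pos : 0 < μ₂ * (v₂ ⬝ᵥ v₂) := by
  rw [μ₂_mul_dotProduct_self]; linarith [r_lt]

lemma eigenvalue₂_lt_eigenvalue₁ : μ₂ * (v₂ ⬝ᵥ v₂) < μ₁ * (v₁ ⬝ᵥ v₁) := by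
  rw [μ₁_mul_dotProduct_self, μ₂_mul_dotProduct_self]; linarith [r_pos]

lemma μ₁_mul_quadForm : μ₁ * (v₁ ⬝ᵥ K10 *ᵥ v₁) = 5063 / 1275 + 5202773 / 779124450 * r := by
  simp [v₁, w₁, μ₁, C10, K10, dotProduct, mulVec, Fin.sum_univ_four, Fin.sum_univ_two]
  norm_num
  linarith [r_sq, r_cube]

lemma c_quadForm : c ⬝ᵥ K10 *ᵥ c = 12963 / 500 := by
  simp [c, C10, K10, dotProduct, mulVec, Fin.sum_univ_four, Fin.sum_univ_two]
  norm_num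

lemma c_dotProduct_self : c ⬝ᵥ c = 903 / 100 := by
  simp [c, C10, dotProduct, mulVec, Fin.sum_univ_four, Fin.sum_univ_two]
  norm_num

lemma K10_transpose : K10ᵀ = K10 := by
  ext i j; fin_cases i <;> fin_cases j <;> rfl

lemma posSemidef_K10 : K10.PosSemidef := by
  refine .of_dotProduct_mulVec_nonneg
    ((conjTranspose_eq_transpose_of_trivial K10).trans K10_transpose) fun z => ?_
  have hLDL : star z ⬝ᵥ K10 *ᵥ z = (z 0 + 7 / 10 * z 1 + 9 / 10 * z 2 + 2 / 5 * z 3) ^ 2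
      + 51 / 100 * (z 1 - 1 / 17 * z 2 + 32 / 51 * z 3) ^ 2 + 16 / 85 * (z 2 + 11 / 8 * z 3) ^ 2
      + 17 / 60 * z 3 ^ 2 := by
    simp [K10, dotProduct, mulVec, Fin.sum_univ_four]
    ring
  rw [hLDL]
  positivity

lemma frobNorm_nystrom_lt :
    frobNorm (K10 - (5 / 17 : ℝ) • vecMulVec c c) < frobNorm (K10 - μ₁ • vecMulVec v₁ v₁) := by
  refine lt_of_pow_lt_pow_left₀ 2 (frobNorm_nonneg _) ?_
  rw [frobNorm_sub_smul_vecMulVec_self_sq _ K10_transpose,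
    frobNorm_sub_smul_vecMulVec_self_sq _ K10_transpose, mul_assoc, c_quadForm, c_dotProduct_self,
    mul_assoc, μ₁_mul_quadForm, μ₁_mul_dotProduct_self]
  nlinarith [r_sq, r_lt]

end NystromCounterexample

open NystromCounterexample

/-- Frobenius-norm counterexample: the standard Nyström rank-1 approximation is strictly
better than the modified one in Frobenius norm for this matrix. -/
theorem stmt_10 :
    K10.PosSemidef ∧
    ∀ Gopt : Matrix (Fin 4) (Fin 4) ℝ, Gopt.rank ≤ 1 →
      (∀ G' : Matrix (Fin 4) (Fin 4) ℝ, G'.rank ≤ 1 →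
        frobNorm (C10 * W10⁻¹ * C10ᵀ - Gopt) ≤ frobNorm (C10 * W10⁻¹ * C10ᵀ - G')) →
      frobNorm (K10 - C10 * M10 * C10ᵀ) < frobNorm (K10 - Gopt) := by
  refine ⟨posSemidef_K10, fun Gopt hrank hopt => ?_⟩
  obtain ⟨x, y, rfl⟩ := exists_eq_vecMulVec_of_rank_le_one hrank
  have hopt₁ := hopt (μ₁ • vecMulVec v₁ v₁) (smul_vecMulVec μ₁ v₁ v₁ ▸ rank_vecMulVec_le _ _)
  rw [C10_mul_W10_inv_mul_transpose] at hopt₁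
  have hGopt := vecMulVec_eq_of_frobNorm_sub_le v₁_dotProduct_v₂ eigenvalue₂_pos
    eigenvalue₂_lt_eigenvalue₁ hopt₁
  rw [C10_mul_M10_mul_transpose, hGopt]
  exact frobNorm_nystrom_lt
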